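/- arXiv:1111.6019 — 3 statements merged into one kernel-verified Lean document; each statement's English description precedes it below -/
import Mathlib

section
/- Let Ψ_{ABCD} ∈ Sym⁴ be in type D normal form with scalar ψ ∈ ℂ and dyad (α_A, β_A), i.e. α_Q β^Q = 1 and Ψ_{ABCD} = −ψ α_{(A} α_B β_C β_{D)}. Then for every c ∈ ℂ the symmetric spinor κ_{AB} = c α_{(A} β_{B)} satisfies the algebraic compatibility condition Ψ_{(ABC}{}^F κ_{D)F} = 0. -/
open scoped BigOperators

noncomputable section

/-- One-index spinors (lower index): elements of S = ℂ². -/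
abbrev Spinor := Fin 2 → ℂ

/-- Two-index spinors. -/
abbrev Spinor2 := Fin 2 → Fin 2 → ℂ

/-- Four-index spinors. -/
abbrev Spinor4 := Fin 2 → Fin 2 → Fin 2 → Fin 2 → ℂ

/-- The alternating spinor ε_{AB}, normalized by ε₀₁ = 1; the raised version
ε^{AB} has the same components. -/
def eps : Fin 2 → Fin 2 → ℂ := fun A B =>
  if A = 0 ∧ B = 1 then 1 else if A = 1 ∧ B = 0 then -1 else 0

/-- Index raising on one-index spinors: ξ^A = ε^{AB} ξ_B. -/
def up1 (ξ : Spinor) : Spinor := fun A => ∑ B, eps A B * ξ B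

/-- The contraction α_Q β^Q. -/
def contr1 (α β : Spinor) : ℂ := ∑ Q, α Q * up1 β Q

/-- Index raising on two-index spinors: ζ^{AB} = ε^{AA'} ε^{BB'} ζ_{A'B'}. -/
def up2 (ζ : Spinor2) : Spinor2 := fun A B => ∑ A', ∑ B', eps A A' * eps B B' * ζ A' B'

/-- The contraction ζ_{AB} η^{AB}. -/
def contr2 (ζ η : Spinor2) : ℂ := ∑ A, ∑ B, ζ A B * up2 η A B

/-- Index raising on four-index spinors. -/
def up4 (Ψ : Spinor4) : Spinor4 := fun A B C D =>
  ∑ A', ∑ B', ∑ C', ∑ D', eps A A' * eps B B' * eps C C' * eps D D' * Ψ A' B' C' D'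

/-- The symmetrized product α_{(A} β_{B)}. -/
def symPair (α β : Spinor) : Spinor2 := fun A B => (α A * β B + α B * β A) / 2

/-- Total symmetrization of a four-index object. -/
def sym4 (T : Spinor4) : Spinor4 := fun A B C D =>
  (∑ σ : Equiv.Perm (Fin 4),
    T (![A, B, C, D] (σ 0)) (![A, B, C, D] (σ 1)) (![A, B, C, D] (σ 2)) (![A, B, C, D] (σ 3))) / 24

/-- The symmetrized product α_{(A} α_B β_C β_{D)}. -/
def symAABB (α β : Spinor) : Spinor4 := sym4 (fun A B C D => α A * α B * β C * β D)

/-- Total symmetry of a four-index spinor (membership in Sym⁴). -/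
def TotallySymmetric4 (Ψ : Spinor4) : Prop :=
  ∀ A B C D, Ψ A B C D = Ψ B A C D ∧ Ψ A B C D = Ψ A C B D ∧ Ψ A B C D = Ψ A B D C

/-- The algebraic condition spinor Ψ_{(ABC}{}^F κ_{D)F}, where
Ψ_{ABC}{}^F = ε^{FE} Ψ_{ABCE}. -/
def algCond (Ψ : Spinor4) (κ : Spinor2) : Spinor4 :=
  sym4 (fun A B C D => ∑ F, (∑ E, eps F E * Ψ A B C E) * κ D F)

/-!
Since `ε` is skew, contracting the raised last index of `Ψ ∝ α_{(A}α_Bβ_Cβ_{D)}` with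
`κ_{DF} ∝ α_{(D}β_{F)}` pairs a raised `α` only with the `β` of `κ` and a raised `β` only with
its `α`, with opposite signs. Before the outer symmetrization this leaves
`(α_Q β^Q)/12 · (α_{(A}α_Bβ_{C)} β_D − α_{(A}β_Bβ_{C)} α_D)`, and both terms symmetrize to
`α_{(A}α_Bβ_Cβ_{D)}`, so they cancel.
-/

lemma sum_perm_fin_four {M : Type*} [AddCommMonoid M] (g : Fin 4 → Fin 4 → Fin 4 → Fin 4 → M) :
    ∑ σ : Equiv.Perm (Fin 4), g (σ 0) (σ 1) (σ 2) (σ 3) =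
      g 0 1 2 3 + g 0 1 3 2 + g 0 2 1 3 + g 0 2 3 1 + g 0 3 1 2 + g 0 3 2 1 +
      g 1 0 2 3 + g 1 0 3 2 + g 1 2 0 3 + g 1 2 3 0 + g 1 3 0 2 + g 1 3 2 0 +
      g 2 0 1 3 + g 2 0 3 1 + g 2 1 0 3 + g 2 1 3 0 + g 2 3 0 1 + g 2 3 1 0 +
      g 3 0 1 2 + g 3 0 2 1 + g 3 1 0 2 + g 3 1 2 0 + g 3 2 0 1 + g 3 2 1 0 := by
  simp only [← Equiv.Perm.decomposeFin.symm.sum_comp, Fintype.sum_prod_type, Fin.sum_univ_succ,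
    Fin.sum_univ_zero]
  simp only [show (1 : Fin 4) = Fin.succ 0 from rfl, show (2 : Fin 4) = Fin.succ 1 from rfl,
    show (3 : Fin 4) = Fin.succ 2 from rfl, show (1 : Fin 3) = Fin.succ 0 from rfl,
    show (2 : Fin 3) = Fin.succ 1 from rfl, show (1 : Fin 2) = Fin.succ 0 from rfl,
    Equiv.Perm.decomposeFin_symm_apply_zero, Equiv.Perm.decomposeFin_symm_apply_succ]
  simp +decide only [Finset.univ_unique, Equiv.Perm.default_eq, Fin.isValue, Nat.reduceAdd,
    Equiv.swap_self, Fin.succ_zero_eq_one, Equiv.refl_apply, Fin.succ_one_eq_two, Fin.reduceSucc,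
    Finset.sum_const, Finset.card_singleton, one_smul, add_zero, Equiv.swap_apply_right,
    Equiv.swap_apply_def, ↓reduceIte]
  abel

lemma sym4_apply (T : Spinor4) (A B C D : Fin 2) :
    sym4 T A B C D =
      (T A B C D + T A B D C + T A C B D + T A C D B + T A D B C + T A D C B +
       T B A C D + T B A D C + T B C A D + T B C D A + T B D A C + T B D C A +
       T C A B D + T C A D B + T C B A D + T C B D A + T C D A B + T C D B A +
       T D A B C + T D A C B + T D B A C + T D B C A + T D C A B + T D C B A) / 24 := by
  rw [sym4, sum_perm_fin_four fun i j k l =>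
    T (![A, B, C, D] i) (![A, B, C, D] j) (![A, B, C, D] k) (![A, B, C, D] l)]
  rfl

lemma sym4_smul (a : ℂ) (T : Spinor4) : sym4 (a • T) = a • sym4 T := by
  ext A B C D
  simp only [sym4, Pi.smul_apply, smul_eq_mul, ← Finset.mul_sum, mul_div_assoc]

lemma eps_zero_zero : eps 0 0 = 0 := rfl
lemma eps_zero_one : eps 0 1 = 1 := rfl
lemma eps_one_zero : eps 1 0 = -1 := rfl
lemma eps_one_one : eps 1 1 = 0 := rfl

lemma sum_eps_mul_mul (ξ η : Spinor) : ∑ F, (∑ E, eps F E * ξ E) * η F = ξ 1 * η 0 - ξ 0 * η 1 := by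
  simp only [Fin.sum_univ_two, eps_zero_zero, eps_zero_one, eps_one_zero, eps_one_one]
  ring

lemma algCond_eq_sym4 (Ψ : Spinor4) (κ : Spinor2) :
    algCond Ψ κ = sym4 fun A B C D => Ψ A B C 1 * κ D 0 - Ψ A B C 0 * κ D 1 := by
  simp only [algCond, sum_eps_mul_mul]

lemma algCond_smul (a b : ℂ) (Ψ : Spinor4) (κ : Spinor2) :
    algCond (a • Ψ) (b • κ) = (a * b) • algCond Ψ κ := by
  rw [algCond_eq_sym4, algCond_eq_sym4, ← sym4_smul]
  congr
  ext A B C D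
  simp only [Pi.smul_apply, smul_eq_mul]
  ring

lemma contr1_eq (α β : Spinor) : contr1 α β = α 0 * β 1 - α 1 * β 0 := by
  simp only [contr1, up1, Fin.sum_univ_two, eps_zero_zero, eps_zero_one, eps_one_zero, eps_one_one]
  ring

lemma symAABB_contract_symPair (α β : Spinor) (A B C D : Fin 2) :
    symAABB α β A B C 1 * symPair α β D 0 - symAABB α β A B C 0 * symPair α β D 1 =
      contr1 α β / 12 *
        ((α A * α B * β C + α A * β B * α C + β A * α B * α C) * β D -
          (α A * β B * β C + β A * α B * β C + β A * β B * α C) * α D) := by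
  simp only [symAABB, sym4_apply, symPair, contr1_eq]
  ring

lemma algCond_symAABB_symPair (α β : Spinor) : algCond (symAABB α β) (symPair α β) = 0 := by
  ext A B C D
  rw [algCond_eq_sym4, sym4_apply]
  simp only [symAABB_contract_symPair, Pi.zero_apply]
  ring

theorem typeD_candidate_algebraic_condition_general (α β : Spinor)
    (ψ : ℂ) (Ψ : Spinor4)
    (hΨ : ∀ A B C D, Ψ A B C D = -ψ * symAABB α β A B C D)
    (c : ℂ) (κ : Spinor2) (hκ : ∀ A B, κ A B = c * symPair α β A B) :
    ∀ A B C D, algCond Ψ κ A B C D = 0 := by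
  have hΨ' : Ψ = (-ψ) • symAABB α β := by ext; exact hΨ ..
  have hκ' : κ = c • symPair α β := by ext; exact hκ ..
  rw [hΨ', hκ', algCond_smul, algCond_symAABB_symPair, smul_zero]
  exact fun _ _ _ _ => rfl

/-- for Ψ in type D normal form with scalar ψ and dyad (α, β),
every multiple κ_{AB} = c α_{(A} β_{B)} satisfies Ψ_{(ABC}{}^F κ_{D)F} = 0. -/
theorem typeD_candidate_algebraic_condition (α β : Spinor) (hdyad : contr1 α β = 1)
    (ψ : ℂ) (Ψ : Spinor4)
    (hΨ : ∀ A B C D, Ψ A B C D = -ψ * symAABB α β A B C D)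
    (c : ℂ) (κ : Spinor2) (hκ : ∀ A B, κ A B = c * symPair α β A B) :
    ∀ A B C D, algCond Ψ κ A B C D = 0 :=
  typeD_candidate_algebraic_condition_general α β ψ Ψ hΨ c κ hκ
end
end

section
/- Let Ψ_{ABCD} ∈ Sym⁴ be in type D normal form with scalar ψ ≠ 0 and dyad (α_A, β_A), i.e. α_Q β^Q = 1 and Ψ_{ABCD} = −ψ α_{(A} α_B β_C β_{D)}, and let p ∈ ℂ be any cube root of ψ (p³ = ψ). Set κ_{AB} = p^{−1} α_{(A} β_{B)}. Then the spinor φ_{AB} ≡ −(3/4) Ψ_{ABCD} κ^{CD} equals −(1/4) p² α_{(A} β_{B)}; equivalently Ψ_{ABCD} κ^{CD} = (1/3) p² α_{(A} β_{B)}. -/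
open scoped BigOperators

noncomputable section

/-- Enumeration of Perm (Fin 4) via three decomposition steps. -/
def permF (i : Fin 4) (j : Fin 3) (k : Fin 2) : Equiv.Perm (Fin 4) :=
  Equiv.Perm.decomposeFin.symm (i, Equiv.Perm.decomposeFin.symm (j,
    Equiv.Perm.decomposeFin.symm (k, 1)))

/-- Explicit table of values of `permF`. -/
def permTab : Fin 4 → Fin 3 → Fin 2 → Fin 4 → Fin 4 :=
  ![![![![0,1,2,3], ![0,1,3,2]], ![![0,2,1,3], ![0,2,3,1]], ![![0,3,2,1], ![0,3,1,2]]],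
    ![![![1,0,2,3], ![1,0,3,2]], ![![1,2,0,3], ![1,2,3,0]], ![![1,3,2,0], ![1,3,0,2]]],
    ![![![2,1,0,3], ![2,1,3,0]], ![![2,0,1,3], ![2,0,3,1]], ![![2,3,0,1], ![2,3,1,0]]],
    ![![![3,1,2,0], ![3,1,0,2]], ![![3,2,1,0], ![3,2,0,1]], ![![3,0,2,1], ![3,0,1,2]]]]

lemma permF_eq_permTab : ∀ i j k m, permF i j k m = permTab i j k m := by decide

lemma perm_sum_24 (f : Equiv.Perm (Fin 4) → ℂ) :
    ∑ σ, f σ = ∑ i : Fin 4, ∑ j : Fin 3, ∑ k : Fin 2, f (permF i j k) := by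
  let e : (Fin 4 × Fin 3 × Fin 2 × Equiv.Perm (Fin 1)) ≃ Equiv.Perm (Fin 4) :=
    ((Equiv.refl (Fin 4)).prodCongr (((Equiv.refl (Fin 3)).prodCongr
      (((Equiv.refl (Fin 2)).prodCongr (Equiv.refl (Equiv.Perm (Fin 1)))).trans
        Equiv.Perm.decomposeFin.symm)).trans Equiv.Perm.decomposeFin.symm)).trans
      Equiv.Perm.decomposeFin.symm
  rw [← Fintype.sum_equiv e (fun x => f (e x)) f (fun _ => rfl)]
  rw [Fintype.sum_prod_type]
  refine Finset.sum_congr rfl (fun i _ => ?_)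
  rw [Fintype.sum_prod_type]
  refine Finset.sum_congr rfl (fun j _ => ?_)
  rw [Fintype.sum_prod_type]
  refine Finset.sum_congr rfl (fun k _ => ?_)
  rw [Fintype.sum_subsingleton _ 1]
  rfl

lemma symAABB_eq (α β : Spinor) (A B C D : Fin 2) :
    symAABB α β A B C D = (α A * α B * β C * β D + α A * α C * β B * β D
      + α A * α D * β B * β C + α B * α C * β A * β D + α B * α D * β A * β C
      + α C * α D * β A * β B) / 6 := by
  show (∑ σ : Equiv.Perm (Fin 4), _) / 24 = _
  rw [perm_sum_24]
  simp only [permF_eq_permTab]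
  simp [permTab, Fin.sum_univ_succ, Fin.sum_univ_two]
  ring

/-- for Ψ in type D normal form with scalar ψ ≠ 0, dyad (α, β),
cube root p of ψ and Killing spinor κ_{AB} = p⁻¹ α_{(A} β_{B)}, the spinor
φ_{AB} ≡ −(3/4) Ψ_{ABCD} κ^{CD} equals −(1/4) p² α_{(A} β_{B)}; equivalently
Ψ_{ABCD} κ^{CD} = (1/3) p² α_{(A} β_{B)}. -/
theorem typeD_phi_formula (α β : Spinor) (hdyad : contr1 α β = 1)
    (ψ p : ℂ) (hψ : ψ ≠ 0) (hp : p ^ 3 = ψ) (Ψ : Spinor4)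
    (hΨ : ∀ A B C D, Ψ A B C D = -ψ * symAABB α β A B C D)
    (κ : Spinor2) (hκ : ∀ A B, κ A B = p⁻¹ * symPair α β A B) :
    (∀ A B, -(3 / 4) * (∑ C, ∑ D, Ψ A B C D * up2 κ C D)
        = -(1 / 4) * p ^ 2 * symPair α β A B) ∧
    (∀ A B, (∑ C, ∑ D, Ψ A B C D * up2 κ C D)
        = (1 / 3) * p ^ 2 * symPair α β A B) := by
  have hd : α 0 * β 1 - α 1 * β 0 = 1 := by
    simp only [contr1, up1, eps, Fin.sum_univ_two] at hdyad
    norm_num at hdyad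
    linear_combination hdyad
  have hpne : p ≠ 0 := by
    intro h
    exact hψ (by rw [← hp, h]; ring)
  have hq : p * p⁻¹ = 1 := mul_inv_cancel₀ hpne
  have key : ∀ A B, (∑ C, ∑ D, Ψ A B C D * up2 κ C D)
      = (1 / 3) * p ^ 2 * symPair α β A B := by
    intro A B
    subst hp
    simp only [hΨ, hκ, symAABB_eq, up2, symPair, eps, Fin.sum_univ_two]
    norm_num
    fin_cases A <;> fin_cases B <;> norm_num
    · linear_combination (p^2*(α 0*β 0 - α 0*α 1*β 0^2 + α 0^2*β 0*β 1))/3 * hd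
        + (p^2*(α 0*α 1^2*β 0^3 - 2*α 0^2*α 1*β 0^2*β 1 + α 0^3*β 0*β 1^2))/3 * hq
    · linear_combination (p^2*(α 1*β 0 - α 1^2*β 0^2 + α 0*β 1 + α 0^2*β 1^2))/6 * hd
        + (p^2*(α 1^3*β 0^3 - α 0*α 1^2*β 0^2*β 1 - α 0^2*α 1*β 0*β 1^2 + α 0^3*β 1^3))/6 * hq
    · linear_combination (p^2*(α 1*β 0 - α 1^2*β 0^2 + α 0*β 1 + α 0^2*β 1^2))/6 * hd
        + (p^2*(α 1^3*β 0^3 - α 0*α 1^2*β 0^2*β 1 - α 0^2*α 1*β 0*β 1^2 + α 0^3*β 1^3))/6 * hq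
    · linear_combination (p^2*(α 1*β 1 - α 1^2*β 0*β 1 + α 0*α 1*β 1^2))/3 * hd
        + (p^2*(α 1^3*β 0^2*β 1 - 2*α 0*α 1^2*β 0*β 1^2 + α 0^2*α 1*β 1^3))/3 * hq
  exact ⟨fun A B => by rw [key A B]; ring, key⟩
end
end

section
/- Let κ_{AB} ∈ Sym² be a symmetric two-index spinor with κ_{AB} κ^{AB} ≠ 0. Then there exist spinors o_A, ι_A with o_A ι^A = 1 and a scalar ϰ ∈ ℂ such that κ_{AB} = e^{ϰ} o_{(A} ι_{B)}. -/
open scoped BigOperators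

noncomputable section

/-- a symmetric spinor κ_{AB} with κ_{AB} κ^{AB} ≠ 0 can be
written as κ_{AB} = e^{ϰ} o_{(A} ι_{B)} with a normalized dyad o_A ι^A = 1. -/
theorem nondegenerate_decomposition (κ : Spinor2) (hsym : ∀ A B, κ A B = κ B A)
    (hnz : contr2 κ κ ≠ 0) :
    ∃ o ι : Spinor, ∃ ϰ : ℂ, contr1 o ι = 1 ∧
      ∀ A B, κ A B = Complex.exp ϰ * symPair o ι A B := by
  have hκ10 : κ 1 0 = κ 0 1 := hsym 1 0
  have hD : κ 0 1 ^ 2 - κ 0 0 * κ 1 1 ≠ 0 := by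
    intro h
    apply hnz
    have : contr2 κ κ = 2 * (κ 0 0 * κ 1 1 - κ 0 1 ^ 2) := by
      simp [contr2, up2, eps, Fin.sum_univ_succ, hκ10]
      ring
    rw [this]
    linear_combination (-2 : ℂ) * h
  by_cases h0 : κ 0 0 = 0
  · have hb0' : κ 0 1 ≠ 0 := by
      intro h; apply hD; rw [h0, h]; ring
    have hb0 : (-2 : ℂ) * κ 0 1 ≠ 0 := by
      exact mul_ne_zero (by norm_num) hb0'
    obtain ⟨ϰ, hϰ⟩ : ∃ ϰ : ℂ, Complex.exp ϰ = -2 * κ 0 1 :=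
      ⟨_, Complex.exp_log hb0⟩
    refine ⟨![0, (-2 * κ 0 1)⁻¹], ![2 * κ 0 1, κ 1 1], ϰ, ?_, ?_⟩
    · simp [contr1, up1, eps, Fin.sum_univ_succ]
      field_simp
    · intro A B
      fin_cases A <;> fin_cases B <;>
        simp [symPair, hϰ, hκ10, h0] <;> field_simp <;> ring
  · obtain ⟨d, hd⟩ : ∃ d : ℂ, d ^ 2 = κ 0 1 ^ 2 - κ 0 0 * κ 1 1 := by
      rcases Complex.isAlgClosed.exists_pow_nat_eq (κ 0 1 ^ 2 - κ 0 0 * κ 1 1)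
        (n := 2) (by norm_num) with ⟨d, hd⟩
      exact ⟨d, hd⟩
    have hd0 : d ≠ 0 := by
      intro h; apply hD; rw [← hd, h]; ring
    have h2d : (2 : ℂ) * d ≠ 0 := by simp [hd0]
    obtain ⟨ϰ, hϰ⟩ : ∃ ϰ : ℂ, Complex.exp ϰ = 2 * d :=
      ⟨_, Complex.exp_log h2d⟩
    refine ⟨![(2 * κ 0 0 * d)⁻¹ * κ 0 0, (2 * κ 0 0 * d)⁻¹ * (κ 0 1 - d)],
      ![κ 0 0, κ 0 1 + d], ϰ, ?_, ?_⟩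
    · simp [contr1, up1, eps, Fin.sum_univ_succ]
      field_simp
      ring
    · intro A B
      fin_cases A <;> fin_cases B <;>
        simp [symPair, hϰ, hκ10] <;> field_simp <;>
          first
            | ring1
            | linear_combination hd
            | linear_combination -hd
            | linear_combination 2 * d * hd
            | linear_combination (-(2 * d)) * hd
            | linear_combination κ 0 0 * hd
            | linear_combination (-(κ 0 0)) * hd
            | linear_combination 2 * κ 0 0 * d * hd
            | linear_combination (-(2 * κ 0 0 * d)) * hd
end
end
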